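/- arXiv:2107.05419 — 5 statements merged into one kernel-verified Lean document; each statement's English description precedes it below -/
import Mathlib

section
/- (Weak co-transitivity.) In every Mealy machine M, for all states r, r', q ∈ Q^M and every input word σ ∈ I*: if σ ⊢ r # r' and δ(q, σ) is defined, then r # q or r' # q. -/
open scoped Classical

/-- A Mealy machine over input alphabet `I` and output alphabet `O`, with state
type `Q`, initial state `q0`, and a partial combined output/transition map
`trans : Q × I ⇀ O × Q` (so the output and transition functions are defined on
exactly the same pairs). -/
structure Mealy (Q I O : Type) where
  q0 : Q
  trans : Q → I → Option (O × Q)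

namespace Mealy

variable {Q Q' I O : Type}

/-- Extension of the combined output/transition map to input words. -/
def stepStar (M : Mealy Q I O) : Q → List I → Option (List O × Q)
  | q, [] => some ([], q)
  | q, i :: σ => (M.trans q i).bind fun p =>
      (stepStar M p.2 σ).map fun r => (p.1 :: r.1, r.2)

/-- `λ(q, σ)`: the output word produced from `q` on input word `σ` (if defined);
this is also the semantics `⟦q⟧ : I* ⇀ O*` of the state `q`. -/
def outStar (M : Mealy Q I O) (q : Q) (σ : List I) : Option (List O) :=
  (M.stepStar q σ).map Prod.fst

/-- `δ(q, σ)`: the state reached from `q` on input word `σ` (if defined). -/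
def delStar (M : Mealy Q I O) (q : Q) (σ : List I) : Option Q :=
  (M.stepStar q σ).map Prod.snd

/-- `σ ⊢ q # p`: the word `σ` witnesses apartness of `q` and `p`. -/
def ApartW (M : Mealy Q I O) (σ : List I) (q p : Q) : Prop :=
  (M.outStar q σ).isSome ∧ (M.outStar p σ).isSome ∧ M.outStar q σ ≠ M.outStar p σ

/-- `q # p`: states `q` and `p` are apart. -/
def Apart (M : Mealy Q I O) (q p : Q) : Prop := ∃ σ, M.ApartW σ q p

/-- `q ≈ r`: states `q` (of `M`) and `r` (of `N`) are equivalent, i.e. have equal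
semantics `⟦q⟧ = ⟦r⟧` as partial maps `I* ⇀ O*`. -/
def StateEquiv (M : Mealy Q I O) (N : Mealy Q' I O) (q : Q) (r : Q') : Prop :=
  ∀ σ, M.outStar q σ = N.outStar r σ

/-- A functional simulation `f : M → N`. -/
def FunSim (M : Mealy Q I O) (N : Mealy Q' I O) (f : Q → Q') : Prop :=
  f M.q0 = N.q0 ∧
    ∀ q i o q'', M.trans q i = some (o, q'') → N.trans (f q) i = some (o, f q'')

/-- A Mealy machine is complete if its transition map is total. -/
def Complete (M : Mealy Q I O) : Prop := ∀ q i, (M.trans q i).isSome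

/-- A Mealy machine is a tree if every state is reached from the root by a
unique input word (its access sequence). -/
def IsTree (M : Mealy Q I O) : Prop :=
  ∀ q : Q, ∃! σ : List I, M.delStar M.q0 σ = some q

/-- `S` is a basis of the observation tree `T`: a subtree containing the root
whose states are pairwise apart. -/
structure IsBasis (T : Mealy Q I O) (S : Set Q) : Prop where
  root_mem : T.q0 ∈ S
  subtree_closed : ∀ q i o q', T.trans q i = some (o, q') → q' ∈ S → q ∈ S
  pairwise_apart : ∀ p ∈ S, ∀ q ∈ S, p ≠ q → T.Apart p q

/-- The frontier `F`: immediate non-basis successors of basis states. -/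
def frontier (T : Mealy Q I O) (S : Set Q) : Set Q :=
  {q' | q' ∉ S ∧ ∃ q ∈ S, ∃ i o, T.trans q i = some (o, q')}

/-- The basis `S` is complete: each basis state has a transition for each input. -/
def BasisComplete (T : Mealy Q I O) (S : Set Q) : Prop :=
  ∀ q ∈ S, ∀ i : I, (T.trans q i).isSome

/-- A Mealy machine `H` with state set `S` contains the basis `S` of `T`:
`δ^H(q0^H, access(q)) = q` for every `q ∈ S`. -/
def ContainsBasis (T : Mealy Q I O) (S : Set Q) (H : Mealy ↥S I O) : Prop :=
  ∀ (q : ↥S) (σ : List I), T.delStar T.q0 σ = some (q : Q) → H.delStar H.q0 σ = some q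

/-- `H` is a hypothesis for the observation tree `T` with basis `S`. -/
def IsHypothesis (T : Mealy Q I O) (S : Set Q) (H : Mealy ↥S I O) : Prop :=
  H.Complete ∧ ContainsBasis T S H ∧
    ∀ (q : ↥S) (i : I) (o' : O) (p' : ↥S), H.trans q i = some (o', p') →
      ∀ (o : O) (p : Q), T.trans (q : Q) i = some (o, p) → o = o' ∧ ¬ T.Apart p (p' : Q)

/-- The equivalence `≈` on the states of a single machine, as a setoid. -/
def equivSetoid (M : Mealy Q I O) : Setoid Q :=
  ⟨fun q r => M.StateEquiv M q r,
   ⟨fun _ _ => rfl, fun h σ => (h σ).symm, fun h1 h2 σ => (h1 σ).trans (h2 σ)⟩⟩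

/-- `R` is a bisimulation between `M` and `N`. -/
def IsBisimulation (M : Mealy Q I O) (N : Mealy Q' I O) (R : Q → Q' → Prop) : Prop :=
  R M.q0 N.q0 ∧
    ∀ q r, R q r → ∀ i o q', M.trans q i = some (o, q') →
      ∃ r', N.trans r i = some (o, r') ∧ R q' r'

end Mealy

/-- weak co-transitivity: in every Mealy machine, if
`σ ⊢ r # r'` and `δ(q, σ)` is defined, then `r # q` or `r' # q`. -/
theorem statement_2 {Q I O : Type} [Fintype I] [Fintype Q]
    (M : Mealy Q I O) (r r' q : Q) (σ : List I)
    (hw : M.ApartW σ r r') (hq : (M.delStar q σ).isSome) :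
    M.Apart r q ∨ M.Apart r' q := by
  obtain ⟨hr, hr', hne⟩ := hw
  have hq' : (M.outStar q σ).isSome := by
    simp [Mealy.outStar, Mealy.delStar, Option.isSome_map] at *
    exact hq
  by_cases h : M.outStar r σ = M.outStar q σ
  · right
    exact ⟨σ, hr', hq', fun he => hne (h ▸ he.symm ▸ rfl)⟩
  · left
    exact ⟨σ, hr, hq', h⟩
end

section
/- Let T be an observation tree with nonempty basis S and frontier F, and assume the output alphabet O is nonempty. If no state of F is isolated (i.e., every frontier state fails to be apart from at least one basis state), then there exists a hypothesis H for T. -/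
open scoped Classical

/-!
Copy the transitions of `T` out of the basis and redirect each target `p` to a basis state that is
not apart from `p`: `p` itself when `p ∈ S` (the only choice, since basis states are pairwise apart),
and otherwise a witness that the frontier state `p` is not isolated. Outputs agree with `T` by
construction; transitions undefined in `T` impose no constraint and are sent to the root. Paths of
`T` ending in `S` stay inside `S` because `S` is a subtree, so `H` follows them verbatim and
therefore contains the basis.
-/

namespace Mealy

variable {Q I O : Type}

theorem not_apart_self (M : Mealy Q I O) (q : Q) : ¬ M.Apart q q :=
  fun ⟨_, _, _, hne⟩ => hne rfl

theorem stepStar_cons_eq_some {M : Mealy Q I O} {q q' : Q} {i : I} {σ : List I} {ω : List O} :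
    M.stepStar q (i :: σ) = some (ω, q') ↔
      ∃ o r ω', M.trans q i = some (o, r) ∧ M.stepStar r σ = some (ω', q') ∧ ω = o :: ω' := by
  simp only [stepStar, Option.bind_eq_some_iff, Option.map_eq_some_iff, Prod.exists,
    Prod.mk.injEq]
  constructor
  · rintro ⟨o, r, htr, ω', q'', hstep, rfl, rfl⟩
    exact ⟨o, r, ω', htr, hstep, rfl⟩
  · rintro ⟨o, r, ω', htr, hstep, rfl⟩
    exact ⟨o, r, htr, ω', q', hstep, rfl, rfl⟩

theorem IsBasis.mem_of_stepStar {T : Mealy Q I O} {S : Set Q} (hS : T.IsBasis S) :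
    ∀ {σ : List I} {r q : Q} {ω : List O}, T.stepStar r σ = some (ω, q) → q ∈ S → r ∈ S
  | [], r, q, ω, h, hq => by
    simp only [stepStar, Option.some.injEq, Prod.mk.injEq] at h
    exact h.2 ▸ hq
  | _ :: _, _, _, _, h, hq => by
    obtain ⟨o, r', _, htr, hstep, -⟩ := stepStar_cons_eq_some.mp h
    exact hS.subtree_closed _ _ o r' htr (hS.mem_of_stepStar hstep hq)

section Redirect

variable [Nonempty O] (T : Mealy Q I O) (S : Set Q) (hroot : T.q0 ∈ S) (f : Q → S)

noncomputable def redirect : Mealy S I O where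
  q0 := ⟨T.q0, hroot⟩
  trans q i := some <|
    match T.trans q i with
    | none => (Classical.arbitrary O, ⟨T.q0, hroot⟩)
    | some (o, p) => (o, f p)

variable {T S hroot f}

theorem redirect_complete : (T.redirect S hroot f).Complete := fun _ _ => rfl

theorem redirect_trans {q : S} {i : I} {o : O} {p : Q} (h : T.trans q i = some (o, p)) :
    (T.redirect S hroot f).trans q i = some (o, f p) := by
  simp [redirect, h]

theorem redirect_stepStar (hS : T.IsBasis S) (hf : ∀ p (hp : p ∈ S), f p = ⟨p, hp⟩) :
    ∀ {σ : List I} {p q : Q} {ω : List O} (hp : p ∈ S) (hq : q ∈ S),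
      T.stepStar p σ = some (ω, q) →
        (T.redirect S hroot f).stepStar ⟨p, hp⟩ σ = some (ω, ⟨q, hq⟩)
  | [], p, q, ω, hp, hq, h => by
    simp only [stepStar, Option.some.injEq, Prod.mk.injEq] at h ⊢
    exact ⟨h.1, Subtype.ext h.2⟩
  | _ :: _, _, _, _, hp, hq, h => by
    obtain ⟨o, r, ω', htr, hstep, rfl⟩ := stepStar_cons_eq_some.mp h
    have hr : r ∈ S := hS.mem_of_stepStar hstep hq
    refine stepStar_cons_eq_some.mpr ⟨o, ⟨r, hr⟩, ω', ?_, redirect_stepStar hS hf hr hq hstep, rfl⟩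
    rw [redirect_trans (q := ⟨_, hp⟩) htr, hf r hr]

theorem redirect_containsBasis (hS : T.IsBasis S) (hf : ∀ p (hp : p ∈ S), f p = ⟨p, hp⟩) :
    ContainsBasis T S (T.redirect S hroot f) := by
  intro q σ hdel
  obtain ⟨⟨ω, _⟩, hstep, rfl⟩ := Option.map_eq_some_iff.mp hdel
  change ((T.redirect S hroot f).stepStar ⟨T.q0, hroot⟩ σ).map Prod.snd = some q
  rw [redirect_stepStar hS hf hroot q.2 hstep]
  rfl

theorem redirect_isHypothesis (hS : T.IsBasis S) (hf : ∀ p (hp : p ∈ S), f p = ⟨p, hp⟩)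
    (hf_apart : ∀ q ∈ S, ∀ i o p, T.trans q i = some (o, p) → ¬ T.Apart p (f p)) :
    IsHypothesis T S (T.redirect S hroot f) := by
  refine ⟨redirect_complete, redirect_containsBasis hS hf, ?_⟩
  intro q i o' p' hH o p hT
  rw [redirect_trans hT, Option.some.injEq, Prod.mk.injEq] at hH
  obtain ⟨rfl, rfl⟩ := hH
  exact ⟨rfl, hf_apart q q.2 i o p hT⟩

end Redirect

section BasisRep

variable (T : Mealy Q I O) {S : Set Q} (hroot : T.q0 ∈ S)

noncomputable def basisRep (p : Q) : S :=
  if h : ∃ b ∈ S, ¬ T.Apart p b then ⟨h.choose, h.choose_spec.1⟩ else ⟨T.q0, hroot⟩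

variable {T hroot}

theorem not_apart_basisRep {p : Q} (h : ∃ b ∈ S, ¬ T.Apart p b) :
    ¬ T.Apart p (T.basisRep hroot p) := by
  rw [basisRep, dif_pos h]
  exact h.choose_spec.2

theorem IsBasis.basisRep_of_mem (hS : T.IsBasis S) (p : Q) (hp : p ∈ S) :
    T.basisRep hroot p = ⟨p, hp⟩ := by
  have h : ∃ b ∈ S, ¬ T.Apart p b := ⟨p, hp, not_apart_self T p⟩
  by_contra hne
  exact not_apart_basisRep h <|
    hS.pairwise_apart p hp _ (T.basisRep hroot p).2 fun heq => hne (Subtype.ext heq.symm)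

end BasisRep

end Mealy

theorem statement_4_general {Q I O : Type} [Nonempty O]
    (T : Mealy Q I O) (S : Set Q) (hS : T.IsBasis S)
    (hnoiso : ∀ p ∈ T.frontier S, ∃ b ∈ S, ¬ T.Apart p b) :
    ∃ H : Mealy ↥S I O, T.IsHypothesis S H := by
  refine ⟨T.redirect S hS.root_mem (T.basisRep hS.root_mem),
    Mealy.redirect_isHypothesis hS hS.basisRep_of_mem ?_⟩
  intro q hq i o p hT
  apply Mealy.not_apart_basisRep
  by_cases hp : p ∈ S
  · exact ⟨p, hp, T.not_apart_self p⟩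
  · exact hnoiso p ⟨hp, q, hq, i, o, hT⟩

/-- For an observation tree `T` with (nonempty) basis `S` and
frontier `F`, with `O` nonempty, if no frontier state is isolated (each fails
to be apart from some basis state) then a hypothesis `H` for `T` exists. -/
theorem statement_4 {Q I O : Type} [Fintype I] [Fintype Q] [Nonempty O]
    (T : Mealy Q I O) (htree : T.IsTree) (S : Set Q) (hS : T.IsBasis S)
    (hnoiso : ∀ p ∈ T.frontier S, ∃ b ∈ S, ¬ T.Apart p b) :
    ∃ H : Mealy ↥S I O, T.IsHypothesis S H :=
  statement_4_general T S hS hnoiso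
end

section
/- Suppose T is an observation tree for a complete Mealy machine M (i.e., there is a functional simulation f : T → M), with basis S and frontier F, such that S is complete, every state in F is identified, and |S| equals the number of equivalence classes of the relation ≈ on Q^M. Then the unique hypothesis H for T satisfies H ≈ M, i.e., q0^H ≈ q0^M. -/
open scoped Classical

/-!
The functional simulation transports apartness from `T` to `M`, so distinct basis states have
inequivalent images; as `|S|` is the number of `≈`-classes of `M`, every state of `M` is
equivalent to the image of exactly one basis state. A successor `p` of a basis state that is not
apart from the basis state `p'` is, being in the basis or identified, apart from all other basis
states, hence `f p ≈ f p'`. Consequently `b ~ m :⇔ f b ≈ m` is a simulation of the complete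
machine `H` by `M` relating the initial states, and such a simulation preserves semantics.
-/

namespace Mealy

section Semantics

variable {Q Q' Q'' I O : Type} {M : Mealy Q I O} {N : Mealy Q' I O}

theorem stepStar_cons {q q' : Q} {i : I} {o : O}
    (h : M.trans q i = some (o, q')) (σ : List I) :
    M.stepStar q (i :: σ) = (M.stepStar q' σ).map fun r => (o :: r.1, r.2) := by
  simp [stepStar, h]

theorem outStar_cons {q q' : Q} {i : I} {o : O}
    (h : M.trans q i = some (o, q')) (σ : List I) :
    M.outStar q (i :: σ) = (M.outStar q' σ).map (o :: ·) := by
  simp only [outStar, stepStar_cons h, Option.map_map]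
  rfl

theorem outStar_singleton_eq_none {q : Q} {i : I}
    (h : M.trans q i = none) : M.outStar q [i] = none := by
  simp [outStar, stepStar, h]

theorem StateEquiv.symm {q : Q} {r : Q'}
    (h : M.StateEquiv N q r) : N.StateEquiv M r q :=
  fun σ => (h σ).symm

theorem StateEquiv.trans {P : Mealy Q'' I O}
    {q : Q} {r : Q'} {s : Q''} (h₁ : M.StateEquiv N q r) (h₂ : N.StateEquiv P r s) :
    M.StateEquiv P q s :=
  fun σ => (h₁ σ).trans (h₂ σ)

theorem StateEquiv.exists_trans {q : Q} {r : Q'}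
    (he : M.StateEquiv N q r) {i : I} {o : O} {q' : Q} (hq : M.trans q i = some (o, q')) :
    ∃ r', N.trans r i = some (o, r') ∧ M.StateEquiv N q' r' := by
  cases hr : N.trans r i with
  | none =>
    have h := he [i]
    rw [outStar_cons hq, outStar_singleton_eq_none hr] at h
    simp [outStar, stepStar] at h
  | some p =>
    obtain ⟨o₂, r'⟩ := p
    have hout := he [i]
    rw [outStar_cons hq, outStar_cons hr] at hout
    obtain rfl : o = o₂ := by simpa [outStar, stepStar] using hout
    refine ⟨r', rfl, fun σ => ?_⟩
    have h := he (i :: σ)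
    rw [outStar_cons hq, outStar_cons hr] at h
    exact Option.map_injective List.cons_injective h

theorem FunSim.stepStar_eq {f : Q → Q'}
    (hf : M.FunSim N f) {σ : List I} {q q' : Q} {w : List O}
    (h : M.stepStar q σ = some (w, q')) : N.stepStar (f q) σ = some (w, f q') := by
  induction σ generalizing q w with
  | nil =>
    obtain ⟨rfl, rfl⟩ : [] = w ∧ q = q' := by simpa [stepStar] using h
    rfl
  | cons i σ ih =>
    simp only [stepStar, Option.bind_eq_some_iff, Option.map_eq_some_iff] at h
    obtain ⟨⟨o, p⟩, hp, ⟨w', p'⟩, hstep, heq⟩ := h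
    cases heq
    simp [stepStar, hf.2 q i o p hp, ih hstep]

theorem FunSim.outStar_eq {f : Q → Q'}
    (hf : M.FunSim N f) {σ : List I} {q : Q} {w : List O}
    (h : M.outStar q σ = some w) : N.outStar (f q) σ = some w := by
  obtain ⟨⟨w, q'⟩, hstep, rfl⟩ := Option.map_eq_some_iff.1 h
  simp [outStar, hf.stepStar_eq hstep]

theorem FunSim.apart {f : Q → Q'}
    (hf : M.FunSim N f) {q p : Q} (h : M.Apart q p) : N.Apart (f q) (f p) := by
  obtain ⟨σ, hq, hp, hne⟩ := h
  obtain ⟨w, hw⟩ := Option.isSome_iff_exists.1 hq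
  obtain ⟨w', hw'⟩ := Option.isSome_iff_exists.1 hp
  refine ⟨σ, ?_, ?_, ?_⟩ <;> simp_all [hf.outStar_eq hw, hf.outStar_eq hw']

theorem Apart.not_stateEquiv {q p : Q} (h : M.Apart q p) :
    ¬ M.StateEquiv M q p := by
  obtain ⟨σ, -, -, hne⟩ := h
  exact fun he => hne (he σ)

theorem IsBisimulation.stateEquiv {R : Q → Q' → Prop}
    (hM : M.Complete) (hR : M.IsBisimulation N R) {q : Q} {r : Q'} (h : R q r) :
    M.StateEquiv N q r := by
  intro σ
  induction σ generalizing q r with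
  | nil => rfl
  | cons i σ ih =>
    obtain ⟨⟨o, q'⟩, hq⟩ := Option.isSome_iff_exists.1 (hM q i)
    obtain ⟨r', hr, hR'⟩ := hR.2 q r h i o q' hq
    rw [outStar_cons hq, outStar_cons hr, ih hR']

theorem ContainsBasis.coe_q0 {T : Mealy Q I O} {S : Set Q} {H : Mealy S I O}
    (hH : ContainsBasis T S H) (h0 : T.q0 ∈ S) : (H.q0 : Q) = T.q0 := by
  have := hH ⟨T.q0, h0⟩ [] rfl
  simp only [delStar, stepStar, Option.map_some, Option.some.injEq] at this
  rw [this]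

end Semantics

section ObservationTree

variable {QT QM I O : Type} {T : Mealy QT I O} {M : Mealy QM I O} {f : QT → QM} {S : Set QT}

theorem exists_basis_stateEquiv [Finite QT] (hf : T.FunSim M f) (hS : T.IsBasis S)
    (hcard : Nat.card S = Nat.card (Quotient M.equivSetoid)) (m : QM) :
    ∃ b ∈ S, M.StateEquiv M (f b) m := by
  have : Nonempty S := ⟨⟨T.q0, hS.root_mem⟩⟩
  have : Finite (Quotient M.equivSetoid) := Nat.finite_of_card_ne_zero (hcard ▸ Nat.card_pos.ne')
  let g : S → Quotient M.equivSetoid := fun b => Quotient.mk _ (f b)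
  have hg : Function.Injective g := by
    intro b b' hbb'
    by_contra hne
    exact (hf.apart (hS.pairwise_apart _ b.2 _ b'.2 (Subtype.coe_ne_coe.2 hne))).not_stateEquiv
      (Quotient.exact hbb')
  obtain ⟨b, hb⟩ := ((Nat.bijective_iff_injective_and_card g).2 ⟨hg, hcard⟩).2 ⟦m⟧
  exact ⟨b, b.2, Quotient.exact hb⟩

theorem stateEquiv_of_apart_basis_of_ne [Finite QT] (hf : T.FunSim M f) (hS : T.IsBasis S)
    (hcard : Nat.card S = Nat.card (Quotient M.equivSetoid)) {p b : QT} (hb : b ∈ S)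
    (hp : ∀ b' ∈ S, b' ≠ b → T.Apart p b') : M.StateEquiv M (f p) (f b) := by
  obtain ⟨b', hb'S, hb'⟩ := exists_basis_stateEquiv hf hS hcard (f p)
  obtain rfl : b' = b := by
    by_contra hne
    exact (hf.apart (hp b' hb'S hne)).not_stateEquiv hb'.symm
  exact hb'.symm

theorem apart_basis_of_ne_of_not_apart (hS : T.IsBasis S)
    (hident : ∀ p ∈ T.frontier S, ∃ b ∈ S, ¬ T.Apart p b ∧ ∀ b' ∈ S, b' ≠ b → T.Apart p b')
    {q p b : QT} {i : I} {o : O} (hq : q ∈ S) (htr : T.trans q i = some (o, p)) (hb : b ∈ S)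
    (hpb : ¬ T.Apart p b) : ∀ b' ∈ S, b' ≠ b → T.Apart p b' := by
  by_cases hpS : p ∈ S
  · obtain rfl : p = b := by
      by_contra hne
      exact hpb (hS.pairwise_apart _ hpS _ hb hne)
    exact fun b' hb' hne => hS.pairwise_apart _ hpS _ hb' hne.symm
  · obtain ⟨b₀, -, -, hb₀⟩ := hident p ⟨hpS, q, hq, i, o, htr⟩
    obtain rfl : b = b₀ := by
      by_contra hne
      exact hpb (hb₀ b hb hne)
    exact hb₀

theorem IsHypothesis.isBisimulation [Finite QT] (hf : T.FunSim M f) (hS : T.IsBasis S)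
    (hcomp : T.BasisComplete S)
    (hident : ∀ p ∈ T.frontier S, ∃ b ∈ S, ¬ T.Apart p b ∧ ∀ b' ∈ S, b' ≠ b → T.Apart p b')
    (hcard : Nat.card S = Nat.card (Quotient M.equivSetoid)) {H : Mealy S I O}
    (hH : T.IsHypothesis S H) : H.IsBisimulation M fun b m => M.StateEquiv M (f b) m := by
  refine ⟨?_, ?_⟩
  · show M.StateEquiv M (f H.q0) M.q0
    rw [hH.2.1.coe_q0 hS.root_mem, hf.1]
    exact fun _ => rfl
  · rintro b m hbm i o' p' hH'
    obtain ⟨⟨o, p⟩, hT⟩ := Option.isSome_iff_exists.1 (hcomp b b.2 i)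
    obtain ⟨rfl, hpp'⟩ := hH.2.2 b i o' p' hH' o p hT
    obtain ⟨m', hm, hpm'⟩ := hbm.exists_trans (hf.2 _ i o p hT)
    have hfp := stateEquiv_of_apart_basis_of_ne hf hS hcard p'.2
      (apart_basis_of_ne_of_not_apart hS hident b.2 hT p'.2 hpp')
    exact ⟨m', hm, hfp.symm.trans hpm'⟩

end ObservationTree

end Mealy

theorem statement_6_general {QT QM I O : Type} [Fintype QT]
    (T : Mealy QT I O) (M : Mealy QM I O)
    (f : QT → QM) (hf : T.FunSim M f)
    (S : Set QT) (hS : T.IsBasis S)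
    (hcomp : T.BasisComplete S)
    (hident : ∀ p ∈ T.frontier S,
      ∃ b ∈ S, ¬ T.Apart p b ∧ ∀ b' ∈ S, b' ≠ b → T.Apart p b')
    (hcard : Nat.card ↥S = Nat.card (Quotient M.equivSetoid))
    (H : Mealy ↥S I O) (hH : T.IsHypothesis S H) :
    H.StateEquiv M H.q0 M.q0 := by
  have hbisim := hH.isBisimulation hf hS hcomp hident hcard
  exact hbisim.stateEquiv hH.1 hbisim.1

/-- If `T` is an observation tree for a complete Mealy machine `M`
(via a functional simulation `f : T → M`) with complete basis `S`, all frontier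
states identified, and `|S|` equal to the number of equivalence classes of `≈`
on `Q^M`, then the unique hypothesis `H` for `T` satisfies `H ≈ M`. -/
theorem statement_6 {QT QM I O : Type} [Fintype I] [Fintype QT] [Fintype QM]
    (T : Mealy QT I O) (M : Mealy QM I O) (hM : M.Complete)
    (f : QT → QM) (hf : T.FunSim M f)
    (htree : T.IsTree) (S : Set QT) (hS : T.IsBasis S)
    (hcomp : T.BasisComplete S)
    (hident : ∀ p ∈ T.frontier S,
      ∃ b ∈ S, ¬ T.Apart p b ∧ ∀ b' ∈ S, b' ≠ b → T.Apart p b')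
    (hcard : Nat.card ↥S = Nat.card (Quotient M.equivSetoid))
    (H : Mealy ↥S I O) (hH : T.IsHypothesis S H) :
    H.StateEquiv M H.q0 M.q0 :=
  statement_6_general T M f hf S hS hcomp hident hcard H hH
end

section
/- Let T be an observation tree with complete basis S and frontier F, and let H be a hypothesis for T. Define f : Q^T → Q^H by f(q) = δ^H(q0^H, access(q)) (which is defined since H is complete). Then there exists a functional simulation T → H (i.e., H is consistent) if and only if there is no q ∈ Q^T with q # f(q) (apartness taken in T, using Q^H = S ⊆ Q^T); in that case f itself is a functional simulation. -/
open scoped Classical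

namespace Mealy

variable {Q Q' I O : Type}

theorem stepStar_append (M : Mealy Q I O) (q : Q) (σ τ : List I) :
    M.stepStar q (σ ++ τ) = (M.stepStar q σ).bind fun r =>
      (M.stepStar r.2 τ).map fun s => (r.1 ++ s.1, s.2) := by
  induction σ generalizing q with
  | nil => simp [stepStar]
  | cons i σ ih =>
    simp only [List.cons_append, stepStar]
    cases h : M.trans q i with
    | none => simp
    | some p =>
      simp only [Option.bind_some, List.append_eq]
      rw [ih p.2]
      cases hs : M.stepStar p.2 σ with
      | none => simp
      | some r =>
        cases ht : M.stepStar r.2 τ <;> simp [*]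

theorem stepStar_single (M : Mealy Q I O) (q : Q) (i : I) (o : O) (q' : Q)
    (h : M.trans q i = some (o, q')) : M.stepStar q [i] = some ([o], q') := by
  simp [stepStar, h]

theorem sim_stepStar {M : Mealy Q I O} {N : Mealy Q' I O} {g : Q → Q'}
    (hg : M.FunSim N g) : ∀ (σ : List I) (q : Q) (w : List O) (q' : Q),
      M.stepStar q σ = some (w, q') → N.stepStar (g q) σ = some (w, g q') := by
  intro σ
  induction σ with
  | nil => intro q w q' h; simp [stepStar] at h ⊢; exact ⟨h.1, congrArg g h.2⟩
  | cons i σ ih =>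
    intro q w q' h
    simp only [stepStar] at h
    cases ht : M.trans q i with
    | none => rw [ht] at h; simp at h
    | some p =>
      rw [ht] at h
      simp only [Option.bind_some, Option.map_eq_some_iff] at h
      obtain ⟨r, hr, hwq⟩ := h
      have hstep := hg.2 q i p.1 p.2 (by rw [ht])
      simp only [stepStar, hstep, Option.bind_some, ih p.2 r.1 r.2 hr]
      cases hwq; simp

end Mealy

/-- Let `T` be an observation tree with complete basis `S`, `H` a
hypothesis for `T`, and `f : Q^T → Q^H` the map `f q = δ^H(q0^H, access(q))`
(well defined as `H` is complete).  Then a functional simulation `T → H` exists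
(`H` is consistent) iff there is no `q` with `q # f q` in `T`; and in that case
`f` itself is a functional simulation. -/
theorem statement_12 {Q I O : Type} [Fintype I] [Fintype Q]
    (T : Mealy Q I O) (htree : T.IsTree) (S : Set Q) (hS : T.IsBasis S)
    (hcomp : T.BasisComplete S) (H : Mealy ↥S I O) (hH : T.IsHypothesis S H)
    (f : Q → ↥S)
    (hf : ∀ (q : Q) (σ : List I), T.delStar T.q0 σ = some q →
      H.delStar H.q0 σ = some (f q)) :
    ((∃ g : Q → ↥S, T.FunSim H g) ↔ ∀ q : Q, ¬ T.Apart q (f q : Q)) ∧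
    ((∀ q : Q, ¬ T.Apart q (f q : Q)) → T.FunSim H f) := by
  obtain ⟨hHcomp, hHcont, hHhyp⟩ := hH
  -- every state of T is reachable
  have hreach : ∀ q : Q, ∃ σ w, T.stepStar T.q0 σ = some (w, q) := by
    intro q
    obtain ⟨σ, hσ, -⟩ := htree q
    obtain ⟨r, hr, hr2⟩ := Option.map_eq_some_iff.mp hσ
    exact ⟨σ, r.1, by subst hr2; rw [hr]⟩
  have hfq0 : f T.q0 = H.q0 := by
    have h0 : T.delStar T.q0 [] = some T.q0 := by simp [Mealy.delStar, Mealy.stepStar]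
    have h1 := hf T.q0 [] h0
    simp [Mealy.delStar, Mealy.stepStar] at h1
    exact h1.symm
  -- f fixes basis states
  have hff : ∀ s : ↥S, f (s : Q) = s := by
    intro s
    obtain ⟨τ, w0, hst0⟩ := hreach (s : Q)
    have hd : T.delStar T.q0 τ = some (s : Q) := by simp [Mealy.delStar, hst0]
    have e1 := hf (s : Q) τ hd
    have e2 := hHcont s τ hd
    rw [e1] at e2
    exact Option.some_inj.mp e2
  -- the main consistency lemma: no apartness → f is a functional simulation
  have hsim : (∀ q : Q, ¬ T.Apart q (f q : Q)) → T.FunSim H f := by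
    intro hap
    refine ⟨hfq0, ?_⟩
    intro q i o q'' htr
    obtain ⟨σ, w, hst⟩ := hreach q
    have hdel : T.delStar T.q0 σ = some q := by simp [Mealy.delStar, hst]
    have hst1 : T.stepStar q [i] = some ([o], q'') := Mealy.stepStar_single T q i o q'' htr
    have hst2 : T.stepStar T.q0 (σ ++ [i]) = some (w ++ [o], q'') := by
      rw [Mealy.stepStar_append, hst]; simp [hst1]
    have hdel2 : T.delStar T.q0 (σ ++ [i]) = some q'' := by simp [Mealy.delStar, hst2]
    have hH1 := hf q σ hdel
    have hH2 := hf q'' (σ ++ [i]) hdel2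
    obtain ⟨rH, hrH, hrH2⟩ := Option.map_eq_some_iff.mp hH1
    obtain ⟨⟨o', p'⟩, htrH⟩ := Option.isSome_iff_exists.mp (hHcomp (f q) i)
    have hstH : H.stepStar H.q0 (σ ++ [i]) = some (rH.1 ++ [o'], p') := by
      rw [Mealy.stepStar_append, hrH]
      simp [hrH2, Mealy.stepStar_single H (f q) i o' p' htrH]
    have hp' : p' = f q'' := by
      rw [Mealy.delStar, hstH] at hH2
      simpa using hH2
    obtain ⟨⟨o2, p2⟩, htrT⟩ := Option.isSome_iff_exists.mp (hcomp (f q : Q) (f q).2 i)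
    obtain ⟨ho2, -⟩ := hHhyp (f q) i o' p' htrH o2 p2 htrT
    have hoo2 : o = o2 := by
      by_contra hne
      refine hap q ⟨[i], ?_, ?_, ?_⟩
      · simp [Mealy.outStar, hst1]
      · simp [Mealy.outStar, Mealy.stepStar_single T (f q : Q) i o2 p2 htrT]
      · simp [Mealy.outStar, hst1, Mealy.stepStar_single T (f q : Q) i o2 p2 htrT]
        exact hne
    rw [htrH, hp', hoo2, ho2]
  refine ⟨⟨?_, fun hap => ⟨f, hsim hap⟩⟩, hsim⟩
  rintro ⟨g, hg⟩ q ⟨σ, h1, h2, h3⟩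
  -- g = f
  have hgf : ∀ q : Q, g q = f q := by
    intro q
    obtain ⟨τ, w, hst⟩ := hreach q
    have hs := Mealy.sim_stepStar hg τ T.q0 w q hst
    rw [hg.1] at hs
    have h2' := hf q τ (by simp [Mealy.delStar, hst])
    rw [Mealy.delStar, hs] at h2'
    simpa using h2'
  obtain ⟨w, hw⟩ := Option.isSome_iff_exists.mp h1
  obtain ⟨⟨w1, r⟩, hr, hr2⟩ := Option.map_eq_some_iff.mp hw
  obtain ⟨w', hw'⟩ := Option.isSome_iff_exists.mp h2
  obtain ⟨⟨w1', r'⟩, hr', hr2'⟩ := Option.map_eq_some_iff.mp hw'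
  have s1 := Mealy.sim_stepStar hg σ q w1 r hr
  have s2 := Mealy.sim_stepStar hg σ (f q : Q) w1' r' hr'
  rw [hgf q] at s1
  rw [hgf (f q : Q), hff (f q)] at s2
  rw [s1] at s2
  apply h3
  rw [Mealy.outStar, Mealy.outStar, hr, hr']
  simp at s2 ⊢
  exact s2.1
end

section
/- Let T be an observation tree with complete basis S and frontier F, and let H be a hypothesis for T. Suppose ρ ∈ I* is such that λ^T(q0^T, ρ) is defined and λ^T(q0^T, ρ) ≠ λ^H(q0^H, ρ). Then there is a proper prefix σ of ρ that leads to a conflict: δ^T(q0^T, σ) # δ^H(q0^H, σ) in T (using Q^H = S ⊆ Q^T). -/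
open scoped Classical

namespace Mealy

variable {Q Q' I O : Type}

lemma stepStar_cons_of_trans (M : Mealy Q I O) {q : Q} {i : I} {o : O} {p : Q}
    (h : M.trans q i = some (o, p)) (σ : List I) :
    M.stepStar q (i :: σ) = (M.stepStar p σ).map fun r => (o :: r.1, r.2) := by
  simp [stepStar, h]

lemma outStar_cons_of_trans (M : Mealy Q I O) {q : Q} {i : I} {o : O} {p : Q}
    (h : M.trans q i = some (o, p)) (σ : List I) :
    M.outStar q (i :: σ) = (M.outStar p σ).map (o :: ·) := by
  simp only [outStar, stepStar_cons_of_trans M h σ]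
  cases M.stepStar p σ <;> rfl

lemma delStar_cons_of_trans (M : Mealy Q I O) {q : Q} {i : I} {o : O} {p : Q}
    (h : M.trans q i = some (o, p)) (σ : List I) :
    M.delStar q (i :: σ) = M.delStar p σ := by
  simp only [delStar, stepStar_cons_of_trans M h σ]
  cases M.stepStar p σ <;> rfl

lemma delStar_nil (M : Mealy Q I O) (q : Q) : M.delStar q [] = some q := by
  simp [delStar, stepStar]

lemma outStar_nil (M : Mealy Q I O) (q : Q) : M.outStar q [] = some [] := by
  simp [outStar, stepStar]

lemma outStar_isSome_of_complete (M : Mealy Q I O) (hc : M.Complete)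
    (σ : List I) : ∀ q : Q, (M.outStar q σ).isSome := by
  induction σ with
  | nil => intro q; simp [outStar_nil]
  | cons i σ ih =>
      intro q
      obtain ⟨⟨o, p⟩, h⟩ := Option.isSome_iff_exists.mp (hc q i)
      rw [outStar_cons_of_trans M h σ]
      have := ih p
      cases hp : M.outStar p σ with
      | none => rw [hp] at this; simp at this
      | some w => simp

end Mealy

theorem statement_13_aux {Q I O : Type}
    (T : Mealy Q I O) (S : Set Q)
    (hcomp : T.BasisComplete S) (H : Mealy ↥S I O) (hH : T.IsHypothesis S H)
    (ρ : List I) : ∀ (qT : Q) (qH : ↥S),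
    (T.outStar qT ρ).isSome → T.outStar qT ρ ≠ H.outStar qH ρ →
    ∃ σ : List I, σ <+: ρ ∧ σ ≠ ρ ∧
      ∃ (p : Q) (p' : ↥S), T.delStar qT σ = some p ∧
        H.delStar qH σ = some p' ∧ T.Apart p (p' : Q) := by
  induction ρ with
  | nil =>
      intro qT qH _ hne
      exact absurd (by rw [Mealy.outStar_nil, Mealy.outStar_nil]) hne
  | cons i ρ ih =>
      intro qT qH hdef hne
      -- T transition from qT
      have htT : (T.trans qT i).isSome := by
        by_contra h
        rw [Option.not_isSome_iff_eq_none] at h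
        simp [Mealy.outStar, Mealy.stepStar, h] at hdef
      obtain ⟨⟨o, p⟩, hT⟩ := Option.isSome_iff_exists.mp htT
      -- H transition from qH
      obtain ⟨⟨o', p'⟩, hHtr⟩ := Option.isSome_iff_exists.mp (hH.1 qH i)
      -- T transition from (qH : Q)
      obtain ⟨⟨ob, pb⟩, hTb⟩ := Option.isSome_iff_exists.mp (hcomp (qH : Q) qH.2 i)
      have hcond := hH.2.2 qH i o' p' hHtr ob pb hTb
      have hob : ob = o' := hcond.1
      by_cases ho : o = o'
      · -- outputs agree; recurse on tails
        have hTout := T.outStar_cons_of_trans hT ρ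
        have hHout := H.outStar_cons_of_trans hHtr ρ
        have hdefp : (T.outStar p ρ).isSome := by
          rw [hTout] at hdef
          cases h : T.outStar p ρ with
          | none => rw [h] at hdef; simp at hdef
          | some w => simp
        obtain ⟨w, hw⟩ := Option.isSome_iff_exists.mp hdefp
        obtain ⟨w', hw'⟩ := Option.isSome_iff_exists.mp
          (H.outStar_isSome_of_complete hH.1 ρ p')
        have hnetail : T.outStar p ρ ≠ H.outStar p' ρ := by
          intro hEq
          apply hne
          rw [hTout, hHout, hEq, ho]
        obtain ⟨σ, hpre, hneσ, a, b, hda, hdb, hap⟩ := ih p p' hdefp hnetail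
        refine ⟨i :: σ, List.cons_prefix_cons.mpr ⟨rfl, hpre⟩, by simpa using hneσ,
          a, b, ?_, ?_, hap⟩
        · rw [T.delStar_cons_of_trans hT σ]; exact hda
        · rw [H.delStar_cons_of_trans hHtr σ]; exact hdb
      · -- outputs differ: qT and qH are apart via [i]
        refine ⟨[], ⟨i :: ρ, rfl⟩, by simp, qT, qH, T.delStar_nil qT,
          H.delStar_nil qH, ⟨[i], ?_, ?_, ?_⟩⟩
        · rw [T.outStar_cons_of_trans hT [], Mealy.outStar_nil]; simp
        · rw [T.outStar_cons_of_trans hTb [], Mealy.outStar_nil]; simp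
        · rw [T.outStar_cons_of_trans hT [], T.outStar_cons_of_trans hTb [],
            Mealy.outStar_nil, Mealy.outStar_nil]
          simp only [Option.map_some]
          intro hEq
          exact ho (by injection hEq with h; injection (List.cons.injEq .. ▸ h : o :: [] = ob :: []) with h2; exact h2 ▸ hob ▸ rfl)

/-- Let `T` be an observation tree with complete basis `S` and
`H` a hypothesis for `T`.  If `λ^T(q0^T, ρ)` is defined and differs from
`λ^H(q0^H, ρ)`, then some proper prefix `σ` of `ρ` leads to a conflict:
`δ^T(q0^T, σ) # δ^H(q0^H, σ)` in `T`. -/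
theorem statement_13 {Q I O : Type} [Fintype I] [Fintype Q]
    (T : Mealy Q I O) (htree : T.IsTree) (S : Set Q) (hS : T.IsBasis S)
    (hcomp : T.BasisComplete S) (H : Mealy ↥S I O) (hH : T.IsHypothesis S H)
    (ρ : List I) (hdef : (T.outStar T.q0 ρ).isSome)
    (hne : T.outStar T.q0 ρ ≠ H.outStar H.q0 ρ) :
    ∃ σ : List I, σ <+: ρ ∧ σ ≠ ρ ∧
      ∃ (qT : Q) (qH : ↥S), T.delStar T.q0 σ = some qT ∧
        H.delStar H.q0 σ = some qH ∧ T.Apart qT (qH : Q) := by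
  obtain ⟨σ, hpre, hneσ, p, p', hda, hdb, hap⟩ :=
    statement_13_aux T S hcomp H hH ρ T.q0 H.q0 hdef hne
  exact ⟨σ, hpre, hneσ, p, p', hda, hdb, hap⟩
end
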